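/- arXiv:2410.04083 — 9 statements merged into one kernel-verified Lean document; each statement's English description precedes it below -/
import Mathlib

section
/- Let p ≥ 2 be an integer, let f : E → ℝ have L_p-Lipschitz-continuous p-th derivative, let M ≥ L_p, let x ∈ E, and let x⁺ be a basic p-th order tensor step from x with parameter M. Then for every y ∈ E one has f(x⁺) ≤ f(y) + ((M + L_p)/(p+1)!)·‖y − x‖^{p+1}; in particular (taking y = x) the step is monotone: f(x⁺) ≤ f(x). -/
open scoped RealInnerProductSpace

section
variable {E : Type*} [NormedAddCommGroup E] [InnerProductSpace ℝ E]

/-- `f` is `μ`-uniformly star-convex of degree `q` with respect to `xs`. -/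
def UniformlyStarConvex (f : E → ℝ) (xs : E) (q : ℕ) (μ : ℝ) : Prop :=
  ∀ x : E, ∀ α : ℝ, 0 ≤ α → α ≤ 1 →
    f (α • x + (1 - α) • xs) ≤
      α * f x + (1 - α) * f xs - α * (1 - α) * μ / q * ‖x - xs‖ ^ q

/-- `f` has `L`-Lipschitz-continuous `p`-th derivative. -/
def HasLipschitzDeriv (f : E → ℝ) (p : ℕ) (L : ℝ) : Prop :=
  ContDiff ℝ p f ∧
    ∀ x y : E, ‖iteratedFDeriv ℝ p f x - iteratedFDeriv ℝ p f y‖ ≤ L * ‖x - y‖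

/-- The `p`-th order Taylor polynomial `Φ_{x,p}(y)` of `f` at `x`. -/
noncomputable def taylorPoly (f : E → ℝ) (p : ℕ) (x y : E) : ℝ :=
  f x + ∑ k ∈ Finset.Icc 1 p,
    (1 / (Nat.factorial k : ℝ)) * iteratedFDeriv ℝ k f x (fun _ => y - x)

/-- The tensor model `Ω_{x,M}(y)`. -/
noncomputable def tensorModel (f : E → ℝ) (p : ℕ) (M : ℝ) (x y : E) : ℝ :=
  taylorPoly f p x y + M / (Nat.factorial (p + 1) : ℝ) * ‖y - x‖ ^ (p + 1)

/-- `xp` is a basic `p`-th order tensor step from `x` with parameter `M`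
(a global minimizer of the model). -/
def IsTensorStep (f : E → ℝ) (p : ℕ) (M : ℝ) (x xp : E) : Prop :=
  ∀ y : E, tensorModel f p M x xp ≤ tensorModel f p M x y

end

/-!
Taylor's formula with integral remainder of order `p - 1`, minus the `p`-th Taylor term, leaves
`f y - Φ_{x,p}(y) = 1/(p-1)! ∫₀¹ (1-t)^(p-1) (D^p f(x + t(y-x)) - D^p f(x))[y-x]^p dt`.
The Lipschitz bound `L t ‖y-x‖^(p+1)` on the integrand and `∫₀¹ (1-t)^(p-1) t dt = 1/(p(p+1))`
give `|f y - Φ_{x,p}(y)| ≤ L/(p+1)! ‖y-x‖^(p+1)`. So for `M ≥ L` the model `Ω_{x,M}` lies above `f`,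
and `f x⁺ ≤ Ω_{x,M}(x⁺) ≤ Ω_{x,M}(y) ≤ f y + (M+L)/(p+1)! ‖y-x‖^(p+1)`.
-/

open Nat intervalIntegral

theorem integral_one_sub_pow (n : ℕ) : ∫ t in (0 : ℝ)..1, (1 - t) ^ n = 1 / (n + 1) := by
  simp [integral_comp_sub_left fun t : ℝ => t ^ n]

theorem integral_one_sub_pow_mul_self (n : ℕ) :
    ∫ t in (0 : ℝ)..1, (1 - t) ^ n * t = 1 / ((n + 1) * (n + 2)) := by
  have h : (fun t : ℝ => (1 - t) ^ n * t) = fun t => (1 - t) ^ n - (1 - t) ^ (n + 1) := by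
    ext t; ring
  rw [h, integral_sub ((by fun_prop : Continuous _).intervalIntegrable 0 1)
    ((by fun_prop : Continuous _).intervalIntegrable 0 1), integral_one_sub_pow,
    integral_one_sub_pow]
  push_cast
  field_simp
  ring

section

variable {E : Type*} [NormedAddCommGroup E] [InnerProductSpace ℝ E] {f : E → ℝ}

theorem taylorPoly_eq_sum_range (p : ℕ) (x y : E) :
    taylorPoly f p x y =
      ∑ k ∈ Finset.range (p + 1), (k ! : ℝ)⁻¹ * iteratedFDeriv ℝ k f x (fun _ => y - x) := by
  rw [Finset.range_eq_Ico, Finset.sum_eq_sum_Ico_succ_bot (Nat.succ_pos p), zero_add,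
    Nat.succ_eq_add_one, Finset.Ico_add_one_right_eq_Icc, taylorPoly]
  simp

theorem ContDiff.sub_taylorPoly_eq_integral {n : ℕ} (hf : ContDiff ℝ (n + 1) f) (x v : E) :
    f (x + v) - taylorPoly f (n + 1) x (x + v) =
      (n ! : ℝ)⁻¹ * ∫ t in 0..1, (1 - t) ^ n *
        (iteratedFDeriv ℝ (n + 1) f (x + t • v) (fun _ => v) -
          iteratedFDeriv ℝ (n + 1) f x (fun _ => v)) := by
  have hn : (n ! : ℝ) ≠ 0 := by positivity
  simp_rw [mul_sub]
  rw [taylorPoly_eq_sum_range, Finset.sum_range_succ, add_sub_cancel_left,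
    map_add_eq_sum_add_integral_iteratedFDeriv (f := f) fun t _ => hf.contDiffAt,
    integral_sub ((by fun_prop : Continuous _).intervalIntegrable 0 1)
      ((by fun_prop : Continuous _).intervalIntegrable 0 1),
    integral_mul_const, integral_one_sub_pow, factorial_succ]
  simp only [smul_eq_mul]
  push_cast
  field_simp
  ring

namespace HasLipschitzDeriv

variable {p : ℕ} {L : ℝ}

theorem abs_iteratedFDeriv_sub_le (hf : HasLipschitzDeriv f p L) (x z v : E) :
    |iteratedFDeriv ℝ p f z (fun _ => v) - iteratedFDeriv ℝ p f x (fun _ => v)| ≤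
      L * ‖z - x‖ * ‖v‖ ^ p := by
  simpa using ContinuousMultilinearMap.le_of_opNorm_le (hf.2 z x) (fun _ => v)

theorem abs_sub_taylorPoly_le (hf : HasLipschitzDeriv f p L) (hp : 1 ≤ p) (x y : E) :
    |f y - taylorPoly f p x y| ≤ L / (p + 1)! * ‖y - x‖ ^ (p + 1) := by
  obtain ⟨n, rfl⟩ : ∃ n, p = n + 1 := ⟨p - 1, by omega⟩
  obtain ⟨v, rfl⟩ : ∃ v, y = x + v := ⟨y - x, by abel⟩
  set D : ℝ → ℝ := fun t => iteratedFDeriv ℝ (n + 1) f (x + t • v) (fun _ => v)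
  have hD0 : D 0 = iteratedFDeriv ℝ (n + 1) f x (fun _ => v) := by simp [D]
  have hbound : |∫ t in 0..1, (1 - t) ^ n * (D t - D 0)| ≤
      L * ‖v‖ ^ (n + 2) * (1 / ((n + 1) * (n + 2))) := by
    rw [← integral_one_sub_pow_mul_self, ← integral_const_mul, ← Real.norm_eq_abs]
    refine norm_integral_le_of_norm_le zero_le_one (.of_forall fun t ht => ?_)
      (Continuous.intervalIntegrable (by fun_prop) 0 1)
    have hlip := hf.abs_iteratedFDeriv_sub_le x (x + t • v) v
    rw [add_sub_cancel_left, norm_smul, Real.norm_of_nonneg ht.1.le] at hlip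
    have ht' : 0 ≤ 1 - t := sub_nonneg.2 ht.2
    rw [Real.norm_eq_abs, abs_mul, abs_of_nonneg (pow_nonneg ht' n)]
    calc (1 - t) ^ n * |D t - D 0| ≤ (1 - t) ^ n * (L * (t * ‖v‖) * ‖v‖ ^ (n + 1)) := by
          gcongr
          rwa [hD0]
      _ = L * ‖v‖ ^ (n + 2) * ((1 - t) ^ n * t) := by ring
  rw [hf.1.sub_taylorPoly_eq_integral, ← hD0, abs_mul, abs_inv, Nat.abs_cast, add_sub_cancel_left]
  calc (n ! : ℝ)⁻¹ * |∫ t in 0..1, (1 - t) ^ n * (D t - D 0)|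
      ≤ (n ! : ℝ)⁻¹ * (L * ‖v‖ ^ (n + 2) * (1 / ((n + 1) * (n + 2)))) := by gcongr
    _ = L / (n + 1 + 1)! * ‖v‖ ^ (n + 1 + 1) := by
      rw [factorial_succ, factorial_succ]
      push_cast
      field_simp
      ring

theorem le_tensorModel (hf : HasLipschitzDeriv f p L) (hp : 1 ≤ p) {M : ℝ} (hM : L ≤ M)
    (x y : E) : f y ≤ tensorModel f p M x y := by
  have hΦ := (abs_le.1 (hf.abs_sub_taylorPoly_le hp x y)).2
  have hLM : L / (p + 1)! * ‖y - x‖ ^ (p + 1) ≤ M / (p + 1)! * ‖y - x‖ ^ (p + 1) := by gcongr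
  rw [tensorModel]
  linarith

theorem tensorModel_le (hf : HasLipschitzDeriv f p L) (hp : 1 ≤ p) (M : ℝ) (x y : E) :
    tensorModel f p M x y ≤ f y + (M + L) / (p + 1)! * ‖y - x‖ ^ (p + 1) := by
  have hΦ := (abs_le.1 (hf.abs_sub_taylorPoly_le hp x y)).1
  rw [tensorModel, add_div, add_mul]
  linarith

end HasLipschitzDeriv

end

theorem tensor_step_upper_bound_general {E : Type*} [NormedAddCommGroup E]
    [InnerProductSpace ℝ E]
    (f : E → ℝ) (p : ℕ) (hp : 2 ≤ p) (L M : ℝ)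
    (hf : HasLipschitzDeriv f p L) (hM : L ≤ M)
    (x xp : E) (hstep : IsTensorStep f p M x xp) :
    (∀ y : E, f xp ≤ f y + (M + L) / (Nat.factorial (p + 1) : ℝ) * ‖y - x‖ ^ (p + 1)) ∧
      f xp ≤ f x := by
  have hp₁ : 1 ≤ p := by omega
  have hbound (y : E) : f xp ≤ f y + (M + L) / (p + 1)! * ‖y - x‖ ^ (p + 1) :=
    calc f xp ≤ tensorModel f p M x xp := hf.le_tensorModel hp₁ hM x xp
      _ ≤ tensorModel f p M x y := hstep y
      _ ≤ f y + (M + L) / (p + 1)! * ‖y - x‖ ^ (p + 1) := hf.tensorModel_le hp₁ M x y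
  exact ⟨hbound, by simpa using hbound x⟩

theorem tensor_step_upper_bound {E : Type*} [NormedAddCommGroup E]
    [InnerProductSpace ℝ E] [FiniteDimensional ℝ E]
    (f : E → ℝ) (p : ℕ) (hp : 2 ≤ p) (L M : ℝ)
    (hf : HasLipschitzDeriv f p L) (hM : L ≤ M)
    (x xp : E) (hstep : IsTensorStep f p M x xp) :
    (∀ y : E, f xp ≤ f y + (M + L) / (Nat.factorial (p + 1) : ℝ) * ‖y - x‖ ^ (p + 1)) ∧
      f xp ≤ f x :=
  tensor_step_upper_bound_general f p hp L M hf hM x xp hstep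
end

section
/- Let μ > 0, let f : E → ℝ be μ-strongly star-convex with respect to a global minimizer x* and have L₂-Lipschitz-continuous second derivative, let M₂ ≥ L₂, let x ∈ E, and let x⁺ be a Cubic Regularized Newton step from x with parameter M₂ (a basic tensor step with p = 2). Then for every α ∈ [0,1] satisfying α²·((M₂+L₂)/3)·‖x − x*‖ + μα − μ ≤ 0, one has f(x⁺) − f(x*) ≤ (1 − α)·(f(x) − f(x*)). Moreover, if ‖x − x*‖ > 0 and κ = (M₂+L₂)·‖x − x*‖/(3μ), then this condition (and hence the contraction) holds for every α ∈ [0, α*] with α* = (−1 + √(1 + 4κ))/(2κ). -/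
open scoped RealInnerProductSpace

/-!
The cubic model overestimates `f` by the Taylor bound for a Lipschitz Hessian, so the Cubic
Newton step `xp` satisfies `f xp ≤ f y + (M + L)/6 ‖y - x‖³` for every `y`. Choosing
`y = (1 - α) x + α xs` and using strong star-convexity, the gain `α (1 - α) μ/2 ‖x - xs‖²` absorbs
the cubic error `(M + L)/6 α³ ‖x - xs‖³` exactly under the stated condition on `α`. After division
by `μ` that condition reads `κ α² + α - 1 ≤ 0`, whose positive root is `α*`.
-/

open Set

theorem norm_le_pow_succ_of_norm_deriv_le_pow {F : Type*} [NormedAddCommGroup F]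
    [NormedSpace ℝ F] {φ φ' : ℝ → F} {C b : ℝ} (n : ℕ) (hφ : ∀ t, HasDerivAt φ (φ' t) t)
    (hφ0 : φ 0 = 0) (hbound : ∀ t ∈ Ico 0 b, ‖φ' t‖ ≤ C * t ^ n) :
    ∀ t ∈ Icc 0 b, ‖φ t‖ ≤ C * t ^ (n + 1) / (n + 1) := by
  have hB : ∀ t : ℝ, HasDerivAt (fun t => C * t ^ (n + 1) / (n + 1)) (C * t ^ n) t := by
    intro t
    refine (((hasDerivAt_pow (n + 1) t).const_mul C).div_const ((n : ℝ) + 1)).congr_deriv ?_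
    push_cast
    field_simp
  refine image_norm_le_of_norm_deriv_right_le_deriv_boundary
    (fun t _ => (hφ t).continuousAt.continuousWithinAt) (fun t _ => (hφ t).hasDerivWithinAt)
    ?_ hB hbound
  simp [hφ0]

section Taylor

variable {F : Type*} [NormedAddCommGroup F] [NormedSpace ℝ F] {f : F → ℝ} {L : ℝ}

theorem abs_fderiv_fderiv_apply_sub_le
    (hLip : ∀ u v, ‖iteratedFDeriv ℝ 2 f u - iteratedFDeriv ℝ 2 f v‖ ≤ L * ‖u - v‖)
    (u v h : F) :
    |fderiv ℝ (fderiv ℝ f) u h h - fderiv ℝ (fderiv ℝ f) v h h| ≤ L * ‖u - v‖ * ‖h‖ ^ 2 := by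
  calc |fderiv ℝ (fderiv ℝ f) u h h - fderiv ℝ (fderiv ℝ f) v h h|
      = ‖(iteratedFDeriv ℝ 2 f u - iteratedFDeriv ℝ 2 f v) ![h, h]‖ := by
        simp [iteratedFDeriv_two_apply]
    _ ≤ ‖iteratedFDeriv ℝ 2 f u - iteratedFDeriv ℝ 2 f v‖ * ∏ i : Fin 2, ‖![h, h] i‖ :=
        ContinuousMultilinearMap.le_opNorm _ _
    _ ≤ L * ‖u - v‖ * ‖h‖ ^ 2 := by
        simp only [Fin.prod_univ_two, Matrix.cons_val_zero, Matrix.cons_val_one, ← sq]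
        gcongr
        exact hLip u v

theorem abs_sub_taylor_two_le (hf : ContDiff ℝ 2 f)
    (hLip : ∀ u v, ‖iteratedFDeriv ℝ 2 f u - iteratedFDeriv ℝ 2 f v‖ ≤ L * ‖u - v‖) (x y : F) :
    |f y - (f x + fderiv ℝ f x (y - x) + fderiv ℝ (fderiv ℝ f) x (y - x) (y - x) / 2)| ≤
      L / 6 * ‖y - x‖ ^ 3 := by
  set h := y - x
  set D1 := fderiv ℝ f
  set D2 := fderiv ℝ D1
  have hD0 : Differentiable ℝ f := hf.differentiable (by norm_num)
  have hD1 : Differentiable ℝ D1 :=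
    (hf.fderiv_right (m := 1) (by norm_num)).differentiable (by norm_num)
  have hc : ∀ t : ℝ, HasDerivAt (fun t : ℝ => x + t • h) h t := fun t => by
    simpa using ((hasDerivAt_id t).smul_const h).const_add x
  -- Along `t ↦ x + t • h` we have `φ' = χ` and `|χ' t| ≤ L ‖h‖³ t`; integrating twice from
  -- `t = 0` gives the constant `1/6`.
  set χ : ℝ → ℝ := fun t => D1 (x + t • h) h - D1 x h - t * D2 x h h
  have hχ : ∀ t, HasDerivAt χ (D2 (x + t • h) h h - D2 x h h) t := fun t => by
    have := ((hD1 _).hasFDerivAt.comp_hasDerivAt t (hc t)).clm_apply (hasDerivAt_const t h)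
    refine ((this.sub_const (D1 x h)).sub (hasDerivAt_mul_const (D2 x h h))).congr_deriv ?_
    simp [D2]
  have hχ_le : ∀ t ∈ Icc (0 : ℝ) 1, ‖χ t‖ ≤ L * ‖h‖ ^ 3 / 2 * t ^ 2 := by
    intro t ht
    have := norm_le_pow_succ_of_norm_deriv_le_pow (C := L * ‖h‖ ^ 3) 1 hχ (by simp [χ])
      (fun s hs => ?_) t ht
    · norm_num at this ⊢; linarith
    · calc ‖D2 (x + s • h) h h - D2 x h h‖ ≤ L * ‖x + s • h - x‖ * ‖h‖ ^ 2 :=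
            abs_fderiv_fderiv_apply_sub_le hLip _ _ _
        _ = L * ‖h‖ ^ 3 * s ^ 1 := by
            rw [add_sub_cancel_left, norm_smul, Real.norm_of_nonneg hs.1]; ring
  set φ : ℝ → ℝ := fun t => f (x + t • h) - f x - t * D1 x h - t ^ 2 / 2 * D2 x h h
  have hφ : ∀ t, HasDerivAt φ (χ t) t := fun t => by
    have h2 := ((hasDerivAt_pow 2 t).div_const 2).mul_const (D2 x h h)
    refine ((((hD0 _).hasFDerivAt.comp_hasDerivAt t (hc t)).sub_const (f x)).sub
      (hasDerivAt_mul_const (D1 x h)) |>.sub h2).congr_deriv ?_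
    simp only [χ, D1]
    ring
  have hφ1 := norm_le_pow_succ_of_norm_deriv_le_pow 2 hφ (by simp [φ])
    (fun t ht => hχ_le t (Ico_subset_Icc_self ht)) 1 (right_mem_Icc.mpr zero_le_one)
  calc |f y - (f x + D1 x h + D2 x h h / 2)| = ‖φ 1‖ := by
        simp only [φ, h, one_smul, add_sub_cancel, Real.norm_eq_abs]
        congr 1; ring
    _ ≤ L / 6 * ‖h‖ ^ 3 := by norm_num at hφ1 ⊢; linarith

end Taylor

theorem quadratic_nonpos_of_le_root {κ α : ℝ} (hκ : 0 ≤ κ) (hα : 0 ≤ α)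
    (hle : α ≤ (-1 + √(1 + 4 * κ)) / (2 * κ)) : κ * α ^ 2 + α - 1 ≤ 0 := by
  rcases hκ.eq_or_lt with rfl | hκ
  · -- `(-1 + √1) / 0 = 0` forces `α = 0`
    have : α = 0 := le_antisymm (by simpa using hle) hα
    simp [this]
  have hroot : 2 * κ * α + 1 ≤ √(1 + 4 * κ) := by
    rw [le_div_iff₀ (by positivity)] at hle
    linarith
  have hsq := pow_le_pow_left₀ (by positivity) hroot 2
  rw [Real.sq_sqrt (by positivity)] at hsq
  nlinarith

section TensorStep

variable {E : Type*} [NormedAddCommGroup E] [InnerProductSpace ℝ E] {f : E → ℝ} {L M : ℝ}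

theorem taylorPoly_two (f : E → ℝ) (x y : E) :
    taylorPoly f 2 x y =
      f x + fderiv ℝ f x (y - x) + fderiv ℝ (fderiv ℝ f) x (y - x) (y - x) / 2 := by
  simp [taylorPoly, Finset.sum_Icc_succ_top, iteratedFDeriv_two_apply]
  ring

theorem tensorModel_two (f : E → ℝ) (M : ℝ) (x y : E) :
    tensorModel f 2 M x y = taylorPoly f 2 x y + M / 6 * ‖y - x‖ ^ 3 := by
  norm_num [tensorModel, Nat.factorial]

theorem HasLipschitzDeriv.abs_sub_taylorPoly_two_le (hf : HasLipschitzDeriv f 2 L) (x y : E) :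
    |f y - taylorPoly f 2 x y| ≤ L / 6 * ‖y - x‖ ^ 3 := by
  rw [taylorPoly_two]
  exact abs_sub_taylor_two_le hf.1 hf.2 x y

theorem IsTensorStep.le_add_norm_pow_three {x xp : E} (hstep : IsTensorStep f 2 M x xp)
    (hf : HasLipschitzDeriv f 2 L) (hM : L ≤ M) (y : E) :
    f xp ≤ f y + (M + L) / 6 * ‖y - x‖ ^ 3 := by
  have hxp := abs_le.mp (hf.abs_sub_taylorPoly_two_le x xp)
  have hy := abs_le.mp (hf.abs_sub_taylorPoly_two_le x y)
  have hmodel := hstep y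
  rw [tensorModel_two, tensorModel_two] at hmodel
  have : L / 6 * ‖xp - x‖ ^ 3 ≤ M / 6 * ‖xp - x‖ ^ 3 := by gcongr
  linarith [hxp.2, hy.1]

theorem IsTensorStep.sub_le_mul_sub {xs x xp : E} {μ α : ℝ} (hstep : IsTensorStep f 2 M x xp)
    (hf : HasLipschitzDeriv f 2 L) (hM : L ≤ M) (hsc : UniformlyStarConvex f xs 2 μ)
    (hα₀ : 0 ≤ α) (hα₁ : α ≤ 1)
    (hcond : α ^ 2 * ((M + L) / 3) * ‖x - xs‖ + μ * α - μ ≤ 0) :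
    f xp - f xs ≤ (1 - α) * (f x - f xs) := by
  set r := ‖x - xs‖
  have hstep_y := hstep.le_add_norm_pow_three hf hM ((1 - α) • x + α • xs)
  have hdist : ‖(1 - α) • x + α • xs - x‖ = α * r := by
    rw [show (1 - α) • x + α • xs - x = α • (xs - x) by module, norm_smul,
      Real.norm_of_nonneg hα₀, norm_sub_rev]
  have hsc_y := hsc x (1 - α) (by linarith) (by linarith)
  rw [sub_sub_cancel] at hsc_y
  rw [hdist] at hstep_y
  have : (α ^ 2 * ((M + L) / 3) * r + μ * α - μ) * (α * r ^ 2 / 2) ≤ 0 :=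
    mul_nonpos_of_nonpos_of_nonneg hcond (by positivity)
  push_cast at hsc_y
  nlinarith

end TensorStep

theorem cubic_newton_contraction_general {E : Type*} [NormedAddCommGroup E]
    [InnerProductSpace ℝ E]
    (f : E → ℝ) (xs : E) (μ L M : ℝ) (hμ : 0 < μ)
    (hsc : UniformlyStarConvex f xs 2 μ)
    (hf : HasLipschitzDeriv f 2 L) (hM : L ≤ M)
    (x xp : E) (hstep : IsTensorStep f 2 M x xp) :
    (∀ α : ℝ, 0 ≤ α → α ≤ 1 →
        α ^ 2 * ((M + L) / 3) * ‖x - xs‖ + μ * α - μ ≤ 0 →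
        f xp - f xs ≤ (1 - α) * (f x - f xs)) ∧
      (0 < ‖x - xs‖ →
        ∀ α : ℝ, 0 ≤ α →
          α ≤ (-1 + Real.sqrt (1 + 4 * ((M + L) * ‖x - xs‖ / (3 * μ)))) /
              (2 * ((M + L) * ‖x - xs‖ / (3 * μ))) →
          f xp - f xs ≤ (1 - α) * (f x - f xs)) := by
  refine ⟨fun α hα₀ hα₁ hcond => hstep.sub_le_mul_sub hf hM hsc hα₀ hα₁ hcond,
    fun hr α hα₀ hα => ?_⟩
  set r := ‖x - xs‖
  set κ := (M + L) * r / (3 * μ)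
  have hL : 0 ≤ L := nonneg_of_mul_nonneg_left ((norm_nonneg _).trans (hf.2 x xs)) hr
  have hκ : 0 ≤ κ := div_nonneg (mul_nonneg (by linarith) hr.le) (by positivity)
  have hq := quadratic_nonpos_of_le_root hκ hα₀ hα
  have hcond : α ^ 2 * ((M + L) / 3) * r + μ * α - μ = μ * (κ * α ^ 2 + α - 1) := by
    simp only [κ]
    field_simp
  refine hstep.sub_le_mul_sub hf hM hsc hα₀ (by nlinarith [mul_nonneg hκ (sq_nonneg α)]) ?_
  rw [hcond]
  exact mul_nonpos_of_nonneg_of_nonpos hμ.le hq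

theorem cubic_newton_contraction {E : Type*} [NormedAddCommGroup E]
    [InnerProductSpace ℝ E] [FiniteDimensional ℝ E]
    (f : E → ℝ) (xs : E) (μ L M : ℝ) (hμ : 0 < μ)
    (hmin : ∀ y : E, f xs ≤ f y)
    (hsc : UniformlyStarConvex f xs 2 μ)
    (hf : HasLipschitzDeriv f 2 L) (hM : L ≤ M)
    (x xp : E) (hstep : IsTensorStep f 2 M x xp) :
    (∀ α : ℝ, 0 ≤ α → α ≤ 1 →
        α ^ 2 * ((M + L) / 3) * ‖x - xs‖ + μ * α - μ ≤ 0 →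
        f xp - f xs ≤ (1 - α) * (f x - f xs)) ∧
      (0 < ‖x - xs‖ →
        ∀ α : ℝ, 0 ≤ α →
          α ≤ (-1 + Real.sqrt (1 + 4 * ((M + L) * ‖x - xs‖ / (3 * μ)))) /
              (2 * ((M + L) * ‖x - xs‖ / (3 * μ))) →
          f xp - f xs ≤ (1 - α) * (f x - f xs)) :=
  cubic_newton_contraction_general f xs μ L M hμ hsc hf hM x xp hstep
end

section
/- Let p ≥ q ≥ 2 be integers, μ_q > 0, let f : E → ℝ be μ_q-uniformly star-convex of degree q with respect to a global minimizer x*, have L_p-Lipschitz-continuous p-th derivative, let M_p ≥ (p−1)·L_p, let x ∈ E, and let x⁺ be a basic p-th order tensor step from x with parameter M_p. Then for every α ∈ [0,1] satisfying α^p · (q(M_p+L_p)/((p+1)!·μ_q))·‖x − x*‖^{p−q+1} + α − 1 ≤ 0, one has f(x⁺) − f(x*) ≤ (1 − α)·(f(x) − f(x*)). -/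
open scoped RealInnerProductSpace

/-!
Along the segment `s ↦ x + s • (y - x)`, the Lipschitz bound on `D^p f` gives the Taylor
estimate `|f y - Φ_{x,p}(y)| ≤ L / (p+1)! * ‖y - x‖^(p+1)`: with `g k s` the `k`-th derivative
along the segment, `s ↦ ∑_{k<p} (1-s)^k/k! * g k s + (1-s)^p/p! * g p 0` equals the Taylor sum
at `s = 0` and `f y` at `s = 1`, and its derivative `(1-s)^(p-1)/(p-1)! * (g p s - g p 0)` is at
most `L ‖y - x‖^(p+1)` times `s (1-s)^(p-1)/(p-1)!`, whose integral over `[0, 1]` is `1/(p+1)!`.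

Hence, as `M ≥ L`, the model majorizes `f`, and for `y = (1-α) x + α x*`,
`f x⁺ ≤ Ω(x⁺) ≤ Ω(y) ≤ f y + (M+L)/(p+1)! * α^(p+1) ‖x - x*‖^(p+1)`. Uniform star-convexity
gives `f y ≤ (1-α) f x + α f* - α(1-α) μ/q * ‖x - x*‖^q`, and the condition on `α` says
precisely that this gain absorbs the model error.
-/

open Finset
open scoped Nat

section TaylorOneDim

variable (g : ℕ → ℝ → ℝ) (n : ℕ)

noncomputable def taylorHomotopy (s : ℝ) : ℝ :=
  ∑ k ∈ range (n + 1), (1 - s) ^ k / k ! * g k s + (1 - s) ^ (n + 1) / (n + 1)! * g (n + 1) 0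

theorem taylorHomotopy_zero : taylorHomotopy g n 0 = ∑ k ∈ range (n + 2), g k 0 / k ! := by
  simp [taylorHomotopy, sum_range_succ _ (n + 1), div_eq_inv_mul]

theorem taylorHomotopy_one : taylorHomotopy g n 1 = g 0 1 := by
  rw [taylorHomotopy, sum_eq_single_of_mem 0 (by simp)]
  · simp
  · intro k _ hk
    simp [zero_pow hk]

variable {g n}

theorem hasDerivAt_taylorHomotopy (hg : ∀ k < n + 1, ∀ t, HasDerivAt (g k) (g (k + 1) t) t)
    (t : ℝ) :
    HasDerivAt (taylorHomotopy g n) ((1 - t) ^ n / n ! * (g (n + 1) t - g (n + 1) 0)) t := by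
  have h1 : HasDerivAt (fun s : ℝ => 1 - s) (-1) t := (hasDerivAt_id t).const_sub 1
  -- the derivative of the `k`-th summand is `G (k + 1) - G k`, so the sum telescopes
  set G : ℕ → ℝ := fun k => k * (1 - t) ^ (k - 1) / k ! * g k t
  have hterm : ∀ k ∈ range (n + 1),
      HasDerivAt (fun s => (1 - s) ^ k / k ! * g k s) (G (k + 1) - G k) t := by
    intro k hk
    refine (((h1.pow k).div_const _).mul (hg k (mem_range.mp hk) t)).congr_deriv ?_
    simp only [G, Nat.add_sub_cancel, Nat.factorial_succ, Pi.pow_apply]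
    push_cast
    field_simp
    ring
  have hlast := ((h1.pow (n + 1)).div_const ((n + 1)! : ℝ)).mul_const (g (n + 1) 0)
  refine ((HasDerivAt.fun_sum hterm).add hlast).congr_deriv ?_
  rw [sum_range_sub]
  simp only [G, Nat.add_sub_cancel, Nat.factorial_succ, CharP.cast_eq_zero, zero_mul, zero_div,
    sub_zero]
  push_cast
  field_simp
  ring

theorem abs_sub_sum_taylor_le {K : ℝ} (hg : ∀ k < n + 1, ∀ t, HasDerivAt (g k) (g (k + 1) t) t)
    (hK : ∀ t, 0 ≤ t → |g (n + 1) t - g (n + 1) 0| ≤ K * t) :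
    |g 0 1 - ∑ k ∈ range (n + 2), g k 0 / k !| ≤ K / (n + 2)! := by
  -- the primitive of the derivative bound that vanishes at `0`; `B 1 = K / (n + 2)!`
  set B : ℝ → ℝ := fun t => K / (n + 2)! * (1 - (1 - t) ^ (n + 1) * (1 + (n + 1) * t))
  have hB : ∀ t, HasDerivAt B (K * t * ((1 - t) ^ n / n !)) t := by
    intro t
    have h1 : HasDerivAt (fun s : ℝ => 1 - s) (-1) t := (hasDerivAt_id t).const_sub 1
    have h2 : HasDerivAt (fun s : ℝ => 1 + (n + 1) * s) (n + 1) t := by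
      simpa using ((hasDerivAt_id t).const_mul ((n : ℝ) + 1)).const_add 1
    refine (((h1.pow (n + 1)).mul h2).const_sub 1 |>.const_mul _).congr_deriv ?_
    simp only [Nat.add_sub_cancel, Nat.factorial_succ, Pi.pow_apply]
    push_cast
    field_simp
    ring
  have hbound : ∀ t ∈ Set.Ico (0 : ℝ) 1,
      ‖(1 - t) ^ n / n ! * (g (n + 1) t - g (n + 1) 0)‖ ≤ K * t * ((1 - t) ^ n / n !) := by
    rintro t ⟨ht0, ht1⟩
    have hw : 0 ≤ (1 - t) ^ n / n ! := by
      have : 0 ≤ 1 - t := by linarith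
      positivity
    rw [Real.norm_eq_abs, abs_mul, abs_of_nonneg hw, mul_comm]
    exact mul_le_mul_of_nonneg_right (hK t ht0) hw
  have hφ := hasDerivAt_taylorHomotopy hg
  have hfence := image_norm_le_of_norm_deriv_right_le_deriv_boundary
    (f := fun t => taylorHomotopy g n t - taylorHomotopy g n 0)
    (fun t _ => ((hφ t).sub_const _).continuousAt.continuousWithinAt)
    (fun t _ => ((hφ t).sub_const _).hasDerivWithinAt) (by simp [B]) hB hbound
    (Set.right_mem_Icc.mpr zero_le_one)
  simpa [B, taylorHomotopy_one, taylorHomotopy_zero, Real.norm_eq_abs] using hfence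

end TaylorOneDim

theorem hasDerivAt_iteratedFDeriv_apply_line {E F : Type*} [NormedAddCommGroup E]
    [NormedSpace ℝ E] [NormedAddCommGroup F] [NormedSpace ℝ F] {f : E → F} {n k : ℕ}
    (hf : ContDiff ℝ n f) (hk : k < n) (x v : E) (t : ℝ) :
    HasDerivAt (fun s : ℝ => iteratedFDeriv ℝ k f (x + s • v) (fun _ => v))
      (iteratedFDeriv ℝ (k + 1) f (x + t • v) (fun _ => v)) t := by
  have hline : HasDerivAt (fun s : ℝ => x + s • v) v t := by
    simpa using ((hasDerivAt_id t).smul_const v).const_add x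
  have hD : HasDerivAt (fun s : ℝ => iteratedFDeriv ℝ k f (x + s • v))
      (fderiv ℝ (iteratedFDeriv ℝ k f) (x + t • v) v) t :=
    ((hf.differentiable_iteratedFDeriv (mod_cast hk)) _).hasFDerivAt.comp_hasDerivAt t hline
  -- `iteratedFDeriv ℝ (k + 1) f z (fun _ => v)` unfolds to
  -- `fderiv ℝ (iteratedFDeriv ℝ k f) z v (fun _ => v)`
  exact (ContinuousMultilinearMap.apply ℝ (fun _ : Fin k => E) F
    (fun _ => v)).hasFDerivAt.comp_hasDerivAt t hD

section TensorModel

variable {E : Type*} [NormedAddCommGroup E] [InnerProductSpace ℝ E] {f : E → ℝ} {n : ℕ} {L : ℝ}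

theorem HasLipschitzDeriv.abs_sub_taylorPoly_le_s7 (hf : HasLipschitzDeriv f (n + 1) L) (x y : E) :
    |f y - taylorPoly f (n + 1) x y| ≤ L / (n + 2)! * ‖y - x‖ ^ (n + 2) := by
  set v := y - x
  set g : ℕ → ℝ → ℝ := fun k t => iteratedFDeriv ℝ k f (x + t • v) (fun _ => v)
  have hg : ∀ k < n + 1, ∀ t, HasDerivAt (g k) (g (k + 1) t) t :=
    fun k hk t => hasDerivAt_iteratedFDeriv_apply_line hf.1 hk x v t
  have hK : ∀ t : ℝ, 0 ≤ t → |g (n + 1) t - g (n + 1) 0| ≤ L * ‖v‖ ^ (n + 2) * t := by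
    intro t ht
    set D := iteratedFDeriv ℝ (n + 1) f (x + t • v) - iteratedFDeriv ℝ (n + 1) f x
    calc |g (n + 1) t - g (n + 1) 0| = ‖D (fun _ => v)‖ := by simp [g, D]
      _ ≤ ‖D‖ * ∏ _i : Fin (n + 1), ‖v‖ := D.le_opNorm _
      _ ≤ L * ‖t • v‖ * ‖v‖ ^ (n + 1) := by
        simpa [D] using mul_le_mul_of_nonneg_right (hf.2 (x + t • v) x) (by positivity)
      _ = L * ‖v‖ ^ (n + 2) * t := by
        rw [norm_smul, Real.norm_of_nonneg ht]
        ring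
  have hsum : ∑ k ∈ range (n + 2), g k 0 / k ! = taylorPoly f (n + 1) x y := by
    rw [range_eq_Ico, sum_eq_sum_Ico_succ_bot (by omega), zero_add,
      show Ico 1 (n + 2) = Icc 1 (n + 1) from Ico_add_one_right_eq_Icc 1 (n + 1)]
    simp [g, v, taylorPoly, div_eq_inv_mul]
  have h1 : g 0 1 = f y := by simp [g, v]
  have := abs_sub_sum_taylor_le hg hK
  rwa [hsum, h1, mul_div_right_comm] at this

theorem HasLipschitzDeriv.le_tensorModel_s7 {M : ℝ} (hf : HasLipschitzDeriv f (n + 1) L)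
    (hLM : L ≤ M) (x y : E) : f y ≤ tensorModel f (n + 1) M x y := by
  have hT := (abs_le.mp (hf.abs_sub_taylorPoly_le_s7 x y)).2
  have : L / (n + 2)! * ‖y - x‖ ^ (n + 2) ≤ M / (n + 2)! * ‖y - x‖ ^ (n + 2) := by
    gcongr
  rw [tensorModel]
  linarith

theorem HasLipschitzDeriv.tensorModel_le_s7 {M : ℝ} (hf : HasLipschitzDeriv f (n + 1) L) (x y : E) :
    tensorModel f (n + 1) M x y ≤ f y + (M + L) / (n + 2)! * ‖y - x‖ ^ (n + 2) := by
  have hT := (abs_le.mp (hf.abs_sub_taylorPoly_le_s7 x y)).1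
  rw [tensorModel, add_div, add_mul]
  linarith

theorem HasLipschitzDeriv.nonneg [Nontrivial E] {p : ℕ} (hf : HasLipschitzDeriv f p L) :
    0 ≤ L := by
  obtain ⟨v, hv⟩ := exists_ne (0 : E)
  have := (norm_nonneg _).trans (hf.2 v 0)
  rw [sub_zero] at this
  exact nonneg_of_mul_nonneg_left this (norm_pos_iff.mpr hv)

end TensorModel

theorem model_error_le_star_convexity_gain {p q : ℕ} {K D μ α r : ℝ} (hqp : q ≤ p) (hq : 0 < q)
    (hD : 0 < D) (hμ : 0 < μ) (hα : 0 ≤ α) (hr : 0 ≤ r)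
    (h : α ^ p * (q * K / (D * μ)) * r ^ (p - q + 1) + α - 1 ≤ 0) :
    K / D * (α * r) ^ (p + 1) ≤ (1 - α) * α * μ / q * r ^ q := by
  have hgain := mul_le_mul_of_nonneg_left (show α ^ p * (q * K / (D * μ)) * r ^ (p - q + 1) ≤ 1 - α
    by linarith) (show 0 ≤ α * μ / q * r ^ q by positivity)
  have hpow : r ^ (p - q + 1) * r ^ q = r ^ (p + 1) := by rw [← pow_add]; congr 1; omega
  calc K / D * (α * r) ^ (p + 1)
      = α * μ / q * r ^ q * (α ^ p * (q * K / (D * μ)) * r ^ (p - q + 1)) := by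
        rw [mul_pow, ← hpow, pow_succ]
        field_simp
    _ ≤ α * μ / q * r ^ q * (1 - α) := hgain
    _ = (1 - α) * α * μ / q * r ^ q := by ring

theorem tensor_contraction_general {E : Type*} [NormedAddCommGroup E]
    [InnerProductSpace ℝ E]
    (f : E → ℝ) (xs : E) (p q : ℕ) (μ L M : ℝ)
    (hq : 2 ≤ q) (hpq : q ≤ p) (hμ : 0 < μ)
    (hsc : UniformlyStarConvex f xs q μ)
    (hf : HasLipschitzDeriv f p L)
    (hM : ((p : ℝ) - 1) * L ≤ M)
    (x xp : E) (hstep : IsTensorStep f p M x xp) :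
    ∀ α : ℝ, 0 ≤ α → α ≤ 1 →
      α ^ p * ((q : ℝ) * (M + L) / ((Nat.factorial (p + 1) : ℝ) * μ)) *
          ‖x - xs‖ ^ (p - q + 1) + α - 1 ≤ 0 →
      f xp - f xs ≤ (1 - α) * (f x - f xs) := by
  intro α hα0 hα1 hα
  rcases subsingleton_or_nontrivial E with hE | hE
  · simp [Subsingleton.elim x xs, Subsingleton.elim xp xs]
  obtain ⟨n, rfl⟩ : ∃ n, p = n + 1 := ⟨p - 1, by omega⟩
  have hLM : L ≤ M := by
    have hn : (1 : ℝ) ≤ n := by exact_mod_cast (by omega : 1 ≤ n)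
    push_cast at hM
    nlinarith [hf.nonneg]
  have hconv := hsc x (1 - α) (by linarith) (by linarith)
  rw [sub_sub_cancel] at hconv
  set y := (1 - α) • x + α • xs
  have hyx : ‖y - x‖ = α * ‖x - xs‖ := by
    rw [show y - x = α • (xs - x) by module, norm_smul, Real.norm_of_nonneg hα0, norm_sub_rev]
  have hgain := model_error_le_star_convexity_gain hpq (by omega) (by positivity) hμ hα0
    (norm_nonneg _) hα
  calc f xp - f xs ≤ tensorModel f (n + 1) M x y - f xs := by
        linarith [hf.le_tensorModel_s7 hLM x xp, hstep y]
    _ ≤ f y + (M + L) / (n + 1 + 1)! * (α * ‖x - xs‖) ^ (n + 1 + 1) - f xs := by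
        rw [← hyx]
        linarith [hf.tensorModel_le_s7 (M := M) x y]
    _ ≤ (1 - α) * (f x - f xs) := by linarith

theorem tensor_contraction {E : Type*} [NormedAddCommGroup E]
    [InnerProductSpace ℝ E] [FiniteDimensional ℝ E]
    (f : E → ℝ) (xs : E) (p q : ℕ) (μ L M : ℝ)
    (hq : 2 ≤ q) (hpq : q ≤ p) (hμ : 0 < μ)
    (hmin : ∀ y : E, f xs ≤ f y)
    (hsc : UniformlyStarConvex f xs q μ)
    (hf : HasLipschitzDeriv f p L)
    (hM : ((p : ℝ) - 1) * L ≤ M)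
    (x xp : E) (hstep : IsTensorStep f p M x xp) :
    ∀ α : ℝ, 0 ≤ α → α ≤ 1 →
      α ^ p * ((q : ℝ) * (M + L) / ((Nat.factorial (p + 1) : ℝ) * μ)) *
          ‖x - xs‖ ^ (p - q + 1) + α - 1 ≤ 0 →
      f xp - f xs ≤ (1 - α) * (f x - f xs) :=
  tensor_contraction_general f xs p q μ L M hq hpq hμ hsc hf hM x xp hstep
end

section
/- Let p ≥ 2 be an integer, z > 0, and let α*(z) ∈ (0,1) be the unique root of α^p·z + α − 1 = 0. Then min{1, z^{−1/p}} > α*(z) > min{1/2, (1/2)·z^{−1/p}}. -/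
theorem alpha_star_p_two_sided_bounds (p : ℕ) (hp : 2 ≤ p) (z α : ℝ) (hz : 0 < z)
    (hα : α ∈ Set.Ioo (0 : ℝ) 1) (hroot : α ^ p * z + α - 1 = 0) :
    min 1 (z ^ (-(1 : ℝ) / p)) > α ∧ α > min (1 / 2) ((1 / 2) * z ^ (-(1 : ℝ) / p)) := by
  obtain ⟨hα0, hα1⟩ := hα
  set t : ℝ := z ^ (-(1 : ℝ) / p) with ht
  have hp0 : (p : ℝ) ≠ 0 := by positivity
  have htpos : 0 < t := Real.rpow_pos_of_pos hz _
  have htp : t ^ p = z⁻¹ := by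
    rw [ht, ← Real.rpow_natCast (z ^ (-(1:ℝ)/p)) p, ← Real.rpow_mul hz.le]
    rw [div_mul_cancel₀ _ hp0, Real.rpow_neg_one]
  have hαpz : α ^ p * z = 1 - α := by linarith
  have hαp_lt : α ^ p < t ^ p := by
    rw [htp, ← one_div, lt_div_iff₀ hz]
    nlinarith
  have hαt : α < t := lt_of_pow_lt_pow_left₀ p htpos.le hαp_lt
  constructor
  · exact lt_min hα1 hαt
  · by_contra h
    push_neg at h
    have h1 : α ≤ 1 / 2 := le_trans h (min_le_left _ _)
    have h2 : α ≤ t / 2 := by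
      have := le_trans h (min_le_right _ _)
      linarith
    have hpow : α ^ p ≤ (t / 2) ^ p := pow_le_pow_left₀ hα0.le h2 p
    have htd : (t / 2) ^ p = z⁻¹ / 2 ^ p := by
      rw [div_pow, htp]
    have h2p : (4 : ℝ) ≤ 2 ^ p := by
      calc (4 : ℝ) = 2 ^ 2 := by norm_num
        _ ≤ 2 ^ p := pow_le_pow_right₀ (by norm_num) hp
    have hzinv : 0 < z⁻¹ := inv_pos.mpr hz
    have : α ^ p * z ≤ 1 / 4 := by
      calc α ^ p * z ≤ z⁻¹ / 2 ^ p * z := by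
            apply mul_le_mul_of_nonneg_right _ hz.le
            rw [htd] at hpow; exact hpow
        _ = 1 / 2 ^ p := by field_simp
        _ ≤ 1 / 4 := by
            apply div_le_div_of_nonneg_left (by norm_num) (by norm_num) h2p
    linarith
end

section
/- Let p ≥ 2 be an integer, let 0 < z ≤ 1, and let α*(z) ∈ (0,1) be the unique root of α^p·z + α − 1 = 0. Then 1 − z/(p+1) ≥ α*(z) ≥ 1 − z. -/
theorem alpha_star_p_refined_bounds (p : ℕ) (hp : 2 ≤ p) (z α : ℝ)
    (hz0 : 0 < z) (hz1 : z ≤ 1)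
    (hα : α ∈ Set.Ioo (0 : ℝ) 1) (hroot : α ^ p * z + α - 1 = 0) :
    1 - z / (p + 1) ≥ α ∧ α ≥ 1 - z := by
  obtain ⟨hα0, hα1⟩ := hα
  have hαeq : α = 1 - α ^ p * z := by linarith
  have hαp0 : 0 < α ^ p := pow_pos hα0 p
  have hαp1 : α ^ p < 1 := pow_lt_one₀ hα0.le hα1 (by omega)
  have htz : α ^ p * z ≤ 1 := by nlinarith
  constructor
  · -- Bernoulli: (1 + a)^p ≥ 1 + p*a with a = -(α^p z)
    have hb := one_add_mul_le_pow (a := -(α ^ p * z)) (by linarith) p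
    rw [show (1 : ℝ) + -(α ^ p * z) = α by linarith] at hb
    -- hb : 1 + p * (-(α^p z)) ≤ α^p, i.e. α^p (1 + p z) ≥ 1
    have hkey : α ^ p * (1 + p * z) ≥ 1 := by nlinarith
    have hp1 : (0 : ℝ) < (p : ℝ) + 1 := by positivity
    have : α ^ p ≥ 1 / ((p : ℝ) + 1) := by
      rw [ge_iff_le, div_le_iff₀ hp1]
      nlinarith [hαp0]
    have : α ^ p * z ≥ z / ((p : ℝ) + 1) := by
      rw [ge_iff_le, div_le_iff₀ hp1]
      nlinarith
    linarith
  · nlinarith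
end

section
/- For every real number x > 1 one has 2/(1+x) + log(x/(1+x)) > 0; that is, the derivative of the function s(x) = x·log(x) − (x−1)·log(x+1) is strictly positive on (1, ∞), so s is strictly increasing on (1, ∞). -/
/-!
Since `log (1 + t) < t` for `t > 0`, taking `t = 1 / x` gives `log (x / (1 + x)) > -1 / x`, and
`1 / x < 2 / (1 + x)` exactly when `x > 1`. Positivity of the derivative then gives strict
monotonicity by the mean value theorem.
-/

open Real Set

lemma neg_inv_lt_log_div_one_add {x : ℝ} (hx : 0 < x) : -x⁻¹ < log (x / (1 + x)) := by
  have hne : (1 + x) / x ≠ 1 := by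
    rw [Ne, div_eq_one_iff_eq hx.ne']
    linarith
  have hlt : log ((1 + x) / x) < (1 + x) / x - 1 :=
    log_lt_sub_one_of_pos (by positivity) hne
  have hsub : (1 + x) / x - 1 = x⁻¹ := by field_simp; ring
  rw [← inv_div, log_inv]
  linarith

lemma two_div_one_add_add_log_div_one_add_pos {x : ℝ} (hx : 1 < x) :
    0 < 2 / (1 + x) + log (x / (1 + x)) := by
  have hinv : x⁻¹ < 2 / (1 + x) := by
    rw [inv_eq_one_div, div_lt_div_iff₀ (by linarith) (by linarith)]
    linarith
  linarith [neg_inv_lt_log_div_one_add (zero_lt_one.trans hx)]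

lemma hasDerivAt_mul_log_sub_sub_one_mul_log_add_one {x : ℝ} (hx₀ : x ≠ 0)
    (hx₁ : 1 + x ≠ 0) :
    HasDerivAt (fun x : ℝ => x * log x - (x - 1) * log (x + 1))
      (2 / (1 + x) + log (x / (1 + x))) x := by
  have hx₁' : x + 1 ≠ 0 := by rwa [add_comm]
  have hlog : HasDerivAt (fun x : ℝ => log (x + 1)) (1 / (x + 1)) x :=
    ((hasDerivAt_id' x).add_const 1).log hx₁'
  refine (((hasDerivAt_id' x).mul (hasDerivAt_log hx₀)).sub
    (((hasDerivAt_id' x).sub_const 1).mul hlog)).congr_deriv ?_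
  rw [log_div hx₀ hx₁, add_comm 1 x]
  field_simp
  ring

theorem s_deriv_pos_and_strict_mono :
    (∀ x : ℝ, 1 < x → 2 / (1 + x) + Real.log (x / (1 + x)) > 0) ∧
      StrictMonoOn (fun x : ℝ => x * Real.log x - (x - 1) * Real.log (x + 1))
        (Set.Ioi 1) := by
  have hderiv : ∀ x ∈ Ioi (1 : ℝ),
      HasDerivAt (fun x : ℝ => x * log x - (x - 1) * log (x + 1))
        (2 / (1 + x) + log (x / (1 + x))) x := fun x (hx : 1 < x) =>
    hasDerivAt_mul_log_sub_sub_one_mul_log_add_one (by linarith) (by linarith)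
  refine ⟨fun x hx => two_div_one_add_add_log_div_one_add_pos hx,
    strictMonoOn_of_deriv_pos (convex_Ioi 1) (HasDerivAt.continuousOn hderiv) ?_⟩
  rw [interior_Ioi]
  intro x hx
  rw [(hderiv x hx).deriv]
  exact two_div_one_add_add_log_div_one_add_pos hx
end

section
/- Let E be a finite-dimensional real inner product space, let p ≥ 1 be an integer, let a > 0, and let g, u, v ∈ E. Then (1/((p+1)·2^{p−1}))·‖v − u‖^{p+1} + a·⟨g, v − u⟩ ≥ −(p/(p+1))·2^{(p−1)/p}·(a·‖g‖)^{(p+1)/p}. -/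
/-!
With `t = ‖v - u‖` and `b = a‖g‖`, Cauchy–Schwarz reduces the claim to the scalar inequality
`b t ≤ t^(p+1) / ((p+1) 2^(p-1)) + p/(p+1) · 2^((p-1)/p) · b^((p+1)/p)`. This is Young's
inequality for the conjugate exponents `p + 1` and `(p + 1)/p`, applied to `t / L` and `L b`
with `L = 2^((p-1)/(p+1))`, the scale for which `L^(p+1) = 2^(p-1)`.
-/

open Real

lemma Real.young_inequality_of_nonneg_of_pos_scale {t b L q r : ℝ} (ht : 0 ≤ t) (hb : 0 ≤ b)
    (hL : 0 < L) (hqr : q.HolderConjugate r) :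
    t * b ≤ t ^ q / (q * L ^ q) + L ^ r * b ^ r / r := by
  have young := young_inequality_of_nonneg (div_nonneg ht hL.le) (mul_nonneg hL.le hb) hqr
  rw [div_rpow ht hL.le, mul_rpow hL.le hb] at young
  calc t * b = t / L * (L * b) := by field_simp
    _ ≤ t ^ q / L ^ q / q + L ^ r * b ^ r / r := young
    _ = t ^ q / (q * L ^ q) + L ^ r * b ^ r / r := by rw [div_div, mul_comm (L ^ q)]

lemma Real.holderConjugate_add_one_div {p : ℝ} (hp : 0 < p) :
    (p + 1).HolderConjugate ((p + 1) / p) :=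
  holderConjugate_iff.mpr ⟨by linarith, by field_simp; ring⟩

lemma Real.mul_le_rpow_add_one_add_rpow_add_one_div {p t b : ℝ} (hp : 0 < p) (ht : 0 ≤ t)
    (hb : 0 ≤ b) :
    t * b ≤ t ^ (p + 1) / ((p + 1) * 2 ^ (p - 1))
      + p / (p + 1) * 2 ^ ((p - 1) / p) * b ^ ((p + 1) / p) := by
  set L : ℝ := 2 ^ ((p - 1) / (p + 1))
  have hL : 0 < L := by positivity
  have hLq : L ^ (p + 1) = 2 ^ (p - 1) := by
    rw [← rpow_mul zero_le_two]
    congr 1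
    field_simp
  have hLr : L ^ ((p + 1) / p) = 2 ^ ((p - 1) / p) := by
    rw [← rpow_mul zero_le_two]
    congr 1
    field_simp
  calc t * b ≤ t ^ (p + 1) / ((p + 1) * L ^ (p + 1))
        + L ^ ((p + 1) / p) * b ^ ((p + 1) / p) / ((p + 1) / p) :=
      young_inequality_of_nonneg_of_pos_scale ht hb hL (holderConjugate_add_one_div hp)
    _ = _ := by rw [hLq, hLr]; field_simp

open scoped RealInnerProductSpace in
theorem inner_power_young_general {E : Type*} [NormedAddCommGroup E] [InnerProductSpace ℝ E]
    (p : ℕ) (hp : 1 ≤ p) (a : ℝ) (ha : 0 < a) (g u v : E) :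
    1 / (((p : ℝ) + 1) * 2 ^ (p - 1)) * ‖v - u‖ ^ (p + 1) + a * ⟪g, v - u⟫ ≥
      -((p : ℝ) / ((p : ℝ) + 1)) * 2 ^ (((p : ℝ) - 1) / p) *
        (a * ‖g‖) ^ (((p : ℝ) + 1) / p) := by
  have cauchy_schwarz : -(‖v - u‖ * (a * ‖g‖)) ≤ a * ⟪g, v - u⟫ := by
    have := mul_le_mul_of_nonneg_left (neg_le_of_abs_le (abs_real_inner_le_norm g (v - u))) ha.le
    linarith
  have young := mul_le_rpow_add_one_add_rpow_add_one_div (Nat.cast_pos.mpr hp)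
    (norm_nonneg (v - u)) (mul_nonneg ha.le (norm_nonneg g))
  have hnorm_pow : ‖v - u‖ ^ (p + 1) = ‖v - u‖ ^ ((p : ℝ) + 1) := by
    rw [← rpow_natCast]; push_cast; rfl
  have htwo_pow : (2 : ℝ) ^ (p - 1) = 2 ^ ((p : ℝ) - 1) := by
    rw [← rpow_natCast, Nat.cast_sub hp, Nat.cast_one]
  rw [hnorm_pow, htwo_pow]
  linarith [one_div_mul_eq_div (((p : ℝ) + 1) * 2 ^ ((p : ℝ) - 1)) (‖v - u‖ ^ ((p : ℝ) + 1))]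

open scoped RealInnerProductSpace in
theorem inner_power_young {E : Type*} [NormedAddCommGroup E] [InnerProductSpace ℝ E]
    [FiniteDimensional ℝ E]
    (p : ℕ) (hp : 1 ≤ p) (a : ℝ) (ha : 0 < a) (g u v : E) :
    1 / (((p : ℝ) + 1) * 2 ^ (p - 1)) * ‖v - u‖ ^ (p + 1) + a * ⟪g, v - u⟫ ≥
      -((p : ℝ) / ((p : ℝ) + 1)) * 2 ^ (((p : ℝ) - 1) / p) *
        (a * ‖g‖) ^ (((p : ℝ) + 1) / p) :=
  inner_power_young_general p hp a ha g u v
end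

section
/- Let E be a finite-dimensional real inner product space, let f : E → ℝ be convex and continuously differentiable with a global minimizer x*, and let p ≥ 1 be an integer. Fix x₀ ∈ E, points x₁, …, x_t ∈ E, and weights a₁, …, a_t ≥ 0 with A = Σ_{s=1}^t a_s > 0, and define the estimating function ψ(z) = (1/(p+1))·‖z − x₀‖^{p+1} + Σ_{s=1}^{t} a_s·(f(x_s) + ⟨∇f(x_s), z − x_s⟩). If A·f(x_t) ≤ ψ(z) for every z ∈ E, then f(x_t) − f(x*) ≤ ‖x* − x₀‖^{p+1} / ((p+1)·A). -/
/-!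
Convexity puts each linearization `f (x s) + ⟪∇f (x s), z - x s⟫` below `f z`, so at `z = xs` the
estimating function is at most `‖xs - x₀‖ ^ (p + 1) / (p + 1) + A * f xs`; comparing with the
lower bound `A * f (x t)` and dividing by `A` gives the rate.
-/

open scoped RealInnerProductSpace

open AffineMap in
theorem ConvexOn.add_inner_le_of_hasGradientAt {E : Type*} [NormedAddCommGroup E]
    [InnerProductSpace ℝ E] [CompleteSpace E] {s : Set E} {f : E → ℝ} {f' x y : E}
    (hf : ConvexOn ℝ s f) (hx : x ∈ s) (hy : y ∈ s) (hgrad : HasGradientAt f f' x) :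
    f x + ⟪f', y - x⟫ ≤ f y := by
  let ℓ : ℝ →ᵃ[ℝ] E := lineMap x y
  have hline : HasDerivAt (f ∘ ℓ) ⟪f', y - x⟫ 0 :=
    (lineMap_apply_zero (k := ℝ) x y ▸ hgrad).hasFDerivAt.comp_hasDerivAt (0 : ℝ)
      hasDerivAt_lineMap
  have hslope := (hf.comp_affineMap ℓ).le_slope_of_hasDerivAt (x := 0) (y := 1)
    (by simpa [ℓ]) (by simpa [ℓ]) zero_lt_one hline
  simp only [slope, sub_zero, inv_one, Function.comp_apply, lineMap_apply_one,
    lineMap_apply_zero, vsub_eq_sub, smul_eq_mul, one_mul, ℓ] at hslope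
  linarith

theorem ConvexOn.sum_mul_add_inner_gradient_le {E ι : Type*} [NormedAddCommGroup E]
    [InnerProductSpace ℝ E] [CompleteSpace E] {f : E → ℝ} (hf : ConvexOn ℝ Set.univ f)
    (hdiff : Differentiable ℝ f) (S : Finset ι) (a : ι → ℝ) (ha : ∀ i ∈ S, 0 ≤ a i)
    (x : ι → E) (y : E) :
    ∑ i ∈ S, a i * (f (x i) + ⟪gradient f (x i), y - x i⟫) ≤ (∑ i ∈ S, a i) * f y := by
  rw [Finset.sum_mul]
  gcongr with i hi
  · exact ha i hi
  · exact hf.add_inner_le_of_hasGradientAt (Set.mem_univ _) (Set.mem_univ _)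
      (hdiff (x i)).hasGradientAt

open scoped RealInnerProductSpace in
theorem estimating_function_rate_general {E : Type*} [NormedAddCommGroup E] [InnerProductSpace ℝ E]
    [FiniteDimensional ℝ E]
    (f : E → ℝ) (xs : E) (p : ℕ)
    (hconv : ConvexOn ℝ Set.univ f)
    (hdiff : ContDiff ℝ 1 f)
    (x₀ : E) (t : ℕ) (x : ℕ → E) (a : ℕ → ℝ)
    (ha : ∀ s ∈ Finset.Icc 1 t, 0 ≤ a s)
    (A : ℝ) (hA : A = ∑ s ∈ Finset.Icc 1 t, a s) (hApos : 0 < A)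
    (hψ : ∀ z : E, A * f (x t) ≤
      1 / ((p : ℝ) + 1) * ‖z - x₀‖ ^ (p + 1) +
        ∑ s ∈ Finset.Icc 1 t, a s * (f (x s) + ⟪gradient f (x s), z - x s⟫)) :
    f (x t) - f xs ≤ ‖xs - x₀‖ ^ (p + 1) / (((p : ℝ) + 1) * A) := by
  have hlower := hconv.sum_mul_add_inner_gradient_le (hdiff.differentiable one_ne_zero)
    (Finset.Icc 1 t) a ha x xs
  rw [← hA] at hlower
  have hupper := hψ xs
  rw [one_div_mul_eq_div] at hupper
  have hgap : A * (f (x t) - f xs) * ((p : ℝ) + 1) ≤ ‖xs - x₀‖ ^ (p + 1) :=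
    (le_div_iff₀ (by positivity)).mp (by linarith)
  rw [le_div_iff₀ (by positivity)]
  linarith

open scoped RealInnerProductSpace in
theorem estimating_function_rate {E : Type*} [NormedAddCommGroup E] [InnerProductSpace ℝ E]
    [FiniteDimensional ℝ E]
    (f : E → ℝ) (xs : E) (p : ℕ) (hp : 1 ≤ p)
    (hconv : ConvexOn ℝ Set.univ f)
    (hdiff : ContDiff ℝ 1 f)
    (hmin : ∀ y : E, f xs ≤ f y)
    (x₀ : E) (t : ℕ) (x : ℕ → E) (a : ℕ → ℝ)
    (ha : ∀ s ∈ Finset.Icc 1 t, 0 ≤ a s)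
    (A : ℝ) (hA : A = ∑ s ∈ Finset.Icc 1 t, a s) (hApos : 0 < A)
    (hψ : ∀ z : E, A * f (x t) ≤
      1 / ((p : ℝ) + 1) * ‖z - x₀‖ ^ (p + 1) +
        ∑ s ∈ Finset.Icc 1 t, a s * (f (x s) + ⟪gradient f (x s), z - x s⟫)) :
    f (x t) - f xs ≤ ‖xs - x₀‖ ^ (p + 1) / (((p : ℝ) + 1) * A) :=
  estimating_function_rate_general f xs p hconv hdiff x₀ t x a ha A hA hApos hψ
end

section
/- Let E be a finite-dimensional real inner product space, let S : E → E be a symmetric positive-definite linear map, let g ∈ E, and let L > 0. Then the infimum over v ∈ E of ⟨g, v⟩ + (1/2)·⟨S v, v⟩ + (L/4)·‖v‖⁴ equals the supremum over τ ≥ 0 of −(1/2)·⟨(S + τ·√(2L)·I)^{−1} g, g⟩ − (1/2)·τ², where I is the identity map (for τ ≥ 0 the map S + τ·√(2L)·I is positive definite, hence invertible). -/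
/-!
The primal objective is continuous and coercive, so it has a global minimiser `v₀`, at which
its gradient `g + S v₀ + L‖v₀‖² v₀` vanishes. For `τ ≥ 0` put `A = S + τ√(2L) I`. Completing the
square gives `-½⟪A⁻¹g, g⟫ ≤ ⟪g, v⟫ + ½⟪A v, v⟫`, and AM–GM gives
`τ√(2L)‖v‖²/2 - τ²/2 ≤ L‖v‖⁴/4`; adding them is weak duality. At `τ₀ = √(2L)‖v₀‖²/2` we get
`A = S + L‖v₀‖² I`, so `A⁻¹g = -v₀` by stationarity and both inequalities become equalities.
-/

open scoped RealInnerProductSpace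
open Function Filter Set

section QuarticDuality

variable {E : Type*} [NormedAddCommGroup E] [InnerProductSpace ℝ E]

noncomputable def quarticModel (S : E →ₗ[ℝ] E) (g : E) (L : ℝ) (v : E) : ℝ :=
  ⟪g, v⟫ + (1 / 2) * ⟪S v, v⟫ + (L / 4) * ‖v‖ ^ 4

noncomputable def quarticDual (S : E →ₗ[ℝ] E) (g : E) (L τ : ℝ) : ℝ :=
  -(1 / 2) * ⟪invFun (⇑(S + (τ * Real.sqrt (2 * L)) • (LinearMap.id : E →ₗ[ℝ] E))) g, g⟫
    - (1 / 2) * τ ^ 2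

namespace LinearMap

theorem inner_add_smul_id_self (S : E →ₗ[ℝ] E) (c : ℝ) (x : E) :
    ⟪(S + c • (LinearMap.id : E →ₗ[ℝ] E)) x, x⟫ = ⟪S x, x⟫ + c * ‖x‖ ^ 2 := by
  rw [add_apply, smul_apply, id_apply, inner_add_left, real_inner_smul_left,
    real_inner_self_eq_norm_sq]

theorem bijective_of_inner_self_pos [FiniteDimensional ℝ E] {A : E →ₗ[ℝ] E}
    (hA : ∀ x ≠ 0, 0 < ⟪A x, x⟫) : Bijective A := by
  have hinj : Injective A := by
    refine (injective_iff_map_eq_zero A).2 fun x hx => ?_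
    by_contra hx0
    simpa [hx] using hA x hx0
  exact ⟨hinj, injective_iff_surjective.mp hinj⟩

theorem bijective_add_smul_id [FiniteDimensional ℝ E] {S : E →ₗ[ℝ] E}
    (hpos : ∀ x ≠ 0, 0 < ⟪S x, x⟫) {c : ℝ} (hc : 0 ≤ c) :
    Bijective (S + c • (LinearMap.id : E →ₗ[ℝ] E)) :=
  bijective_of_inner_self_pos fun x hx => by
    rw [inner_add_smul_id_self]
    exact add_pos_of_pos_of_nonneg (hpos x hx) (by positivity)

theorem isPositive_of_inner_self_pos {S : E →ₗ[ℝ] E} (hS : S.IsSymmetric)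
    (hpos : ∀ x ≠ 0, 0 < ⟪S x, x⟫) : S.IsPositive := by
  refine (isPositive_iff S).2 ⟨hS, fun x => ?_⟩
  rcases eq_or_ne x 0 with rfl | hx
  · simp
  · exact (hpos x hx).le

theorem IsPositive.neg_half_inner_le {A : E →ₗ[ℝ] E} (hA : A.IsPositive) {u g : E}
    (hu : A u = g) (v : E) : -(1 / 2) * ⟪u, g⟫ ≤ ⟪g, v⟫ + (1 / 2) * ⟪A v, v⟫ := by
  have h := hA.inner_nonneg_left (v + u)
  rw [map_add, inner_add_left, inner_add_right, inner_add_right, hA.isSymmetric v u, hu,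
    real_inner_comm g v] at h
  rw [real_inner_comm g u]
  linarith

end LinearMap

theorem mul_sqrt_two_mul_sub_sq_le {L : ℝ} (hL : 0 ≤ L) (τ r : ℝ) :
    τ * Real.sqrt (2 * L) * r / 2 - (1 / 2) * τ ^ 2 ≤ (L / 4) * r ^ 2 := by
  have hs : Real.sqrt (2 * L) ^ 2 = 2 * L := Real.sq_sqrt (by linarith)
  nlinarith [sq_nonneg (τ - Real.sqrt (2 * L) * r / 2)]

variable [FiniteDimensional ℝ E] {S : E →ₗ[ℝ] E} {g : E} {L : ℝ}

theorem hasFDerivAt_quarticModel (hS : S.IsSymmetric) (v : E) :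
    HasFDerivAt (quarticModel S g L) (innerSL ℝ (g + S v + (L * ‖v‖ ^ 2) • v)) v := by
  have hlin : HasFDerivAt (fun w => ⟪g, w⟫) (innerSL ℝ g) v := (innerSL ℝ g).hasFDerivAt
  have hquad := (LinearMap.toContinuousLinearMap S).hasFDerivAt.inner ℝ (hasFDerivAt_id v)
  have hquart := (hasStrictFDerivAt_norm_sq v).hasFDerivAt.pow 2
  refine (((hlin.add (hquad.const_mul (1 / 2))).add (hquart.const_mul (L / 4))).congr_fderiv ?_)
    |>.congr_of_eventuallyEq (Eventually.of_forall fun w => ?_)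
  · ext w
    simp only [one_div, LinearMap.coe_toContinuousLinearMap', id_eq, Nat.add_one_sub_one, pow_one,
      nsmul_eq_mul, Nat.cast_ofNat, add_apply, coe_innerSL_apply,
      smul_apply, ContinuousLinearMap.comp_apply,
      ContinuousLinearMap.prod_apply, ContinuousLinearMap.id_apply, fderivInnerCLM_apply,
      real_inner_comm, hS w v, smul_eq_mul, map_add, map_smul]
    ring
  · change _ = ⟪g, w⟫ + 1 / 2 * ⟪S w, w⟫ + L / 4 * (‖w‖ ^ 2) ^ 2
    rw [quarticModel, ← pow_mul]

theorem add_add_smul_eq_zero_of_isLocalMin (hS : S.IsSymmetric) {v : E}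
    (hv : IsLocalMin (quarticModel S g L) v) : g + S v + (L * ‖v‖ ^ 2) • v = 0 := by
  have h := hv.hasFDerivAt_eq_zero (hasFDerivAt_quarticModel hS v)
  rw [← norm_eq_zero, ← innerSL_apply_norm ℝ, h, norm_zero]

theorem exists_forall_quarticModel_le (hS : ∀ x, 0 ≤ ⟪S x, x⟫) (hL : 0 < L) :
    ∃ v, ∀ w, quarticModel S g L v ≤ quarticModel S g L w := by
  have hcont : Continuous (quarticModel S g L) := by
    have := S.continuous_of_finiteDimensional
    unfold quarticModel
    fun_prop
  have hradial : Tendsto (fun r : ℝ => (L / 4) * r ^ 4 - ‖g‖ * r) atTop atTop := by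
    have h := tendsto_id.atTop_mul_atTop₀ (tendsto_atTop_add_const_right _ (-‖g‖)
      ((tendsto_pow_atTop (n := 3) (by norm_num)).const_mul_atTop (by positivity : 0 < L / 4)))
    exact h.congr fun r => by simp only [id]; ring
  refine hcont.exists_forall_le (tendsto_atTop_mono (fun v => ?_)
    (hradial.comp tendsto_norm_cocompact_atTop))
  have hg := neg_le_of_abs_le (abs_real_inner_le_norm g v)
  simp only [comp_apply, quarticModel]
  nlinarith [hS v]

theorem quarticDual_le_quarticModel (hS : S.IsSymmetric) (hpos : ∀ x ≠ 0, 0 < ⟪S x, x⟫)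
    (hL : 0 ≤ L) {τ : ℝ} (hτ : 0 ≤ τ) (v : E) : quarticDual S g L τ ≤ quarticModel S g L v := by
  have hc : 0 ≤ τ * Real.sqrt (2 * L) := by positivity
  have hA := (LinearMap.isPositive_of_inner_self_pos hS hpos).add
    (LinearMap.isPositive_id.smul_of_nonneg hc)
  have hsquare := hA.neg_half_inner_le
    (rightInverse_invFun (LinearMap.bijective_add_smul_id hpos hc).2 g) v
  rw [LinearMap.inner_add_smul_id_self] at hsquare
  have hamgm := mul_sqrt_two_mul_sub_sq_le hL τ (‖v‖ ^ 2)
  rw [quarticDual, quarticModel]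
  linarith

theorem quarticDual_eq_quarticModel_of_stationary (hpos : ∀ x ≠ 0, 0 < ⟪S x, x⟫) (hL : 0 ≤ L)
    {v : E} (hv : g + S v + (L * ‖v‖ ^ 2) • v = 0) :
    quarticDual S g L (Real.sqrt (2 * L) * ‖v‖ ^ 2 / 2) = quarticModel S g L v := by
  have hs : Real.sqrt (2 * L) ^ 2 = 2 * L := Real.sq_sqrt (by linarith)
  have hc : Real.sqrt (2 * L) * ‖v‖ ^ 2 / 2 * Real.sqrt (2 * L) = L * ‖v‖ ^ 2 := by
    linear_combination ‖v‖ ^ 2 / 2 * hs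
  have hAv : (S + (L * ‖v‖ ^ 2) • (LinearMap.id : E →ₗ[ℝ] E)) (-v) = g := by
    simp only [LinearMap.add_apply, LinearMap.smul_apply, LinearMap.id_apply, map_neg]
    linear_combination (norm := module) -hv
  have hu : invFun (⇑(S + (L * ‖v‖ ^ 2) • (LinearMap.id : E →ₗ[ℝ] E))) g = -v := by
    rw [← hAv, leftInverse_invFun (LinearMap.bijective_add_smul_id hpos (by positivity)).1]
  have hvv : ⟪g, v⟫ + ⟪S v, v⟫ + L * ‖v‖ ^ 2 * ‖v‖ ^ 2 = 0 := by
    simpa only [inner_add_left, real_inner_smul_left, real_inner_self_eq_norm_sq,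
      inner_zero_left] using congrArg (⟪·, v⟫) hv
  rw [quarticDual, hc, hu, inner_neg_left, real_inner_comm, quarticModel]
  linear_combination (-1 / 2) * hvv - ‖v‖ ^ 4 / 8 * hs

end QuarticDuality

open scoped RealInnerProductSpace in
theorem quartic_min_max_duality {E : Type*} [NormedAddCommGroup E] [InnerProductSpace ℝ E]
    [FiniteDimensional ℝ E]
    (S : E →ₗ[ℝ] E)
    (hsymm : ∀ x y : E, ⟪S x, y⟫ = ⟪x, S y⟫)
    (hpos : ∀ x : E, x ≠ 0 → 0 < ⟪S x, x⟫)
    (g : E) (L : ℝ) (hL : 0 < L) :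
    (⨅ v : E, ⟪g, v⟫ + (1 / 2) * ⟪S v, v⟫ + (L / 4) * ‖v‖ ^ 4) =
      ⨆ τ : Set.Ici (0 : ℝ),
        (-(1 / 2) * ⟪Function.invFun
            (⇑(S + ((τ : ℝ) * Real.sqrt (2 * L)) • (LinearMap.id : E →ₗ[ℝ] E))) g, g⟫
          - (1 / 2) * (τ : ℝ) ^ 2) := by
  change (⨅ v, quarticModel S g L v) = ⨆ τ : Ici (0 : ℝ), quarticDual S g L τ
  obtain ⟨v₀, hv₀⟩ := exists_forall_quarticModel_le
    (LinearMap.isPositive_of_inner_self_pos hsymm hpos).inner_nonneg_left (g := g) hL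
  have hstat := add_add_smul_eq_zero_of_isLocalMin hsymm
    ((isMinOn_univ_iff.2 hv₀).isLocalMin univ_mem)
  have hmin : IsLeast (range (quarticModel S g L)) (quarticModel S g L v₀) :=
    ⟨mem_range_self v₀, forall_mem_range.2 hv₀⟩
  have hmax : IsGreatest (range fun τ : Ici (0 : ℝ) => quarticDual S g L τ)
      (quarticModel S g L v₀) :=
    ⟨⟨⟨Real.sqrt (2 * L) * ‖v₀‖ ^ 2 / 2, mem_Ici.2 (by positivity)⟩,
        quarticDual_eq_quarticModel_of_stationary hpos hL.le hstat⟩,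
      forall_mem_range.2 fun τ => quarticDual_le_quarticModel hsymm hpos hL.le τ.2 v₀⟩
  rw [hmin.isGLB.ciInf_eq, hmax.isLUB.ciSup_eq]
end
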